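/- For every optimal conditional machine U there exists a constant c ∈ ℕ such that for every string x and every natural number t with t ≤ C(x), there exists k ≤ |x| such that, letting y be the prefix of x of length k, |C(x|y) − t| ≤ c (difference in ℤ). -/

import Mathlib

/-- A string is a finite binary string. -/
abbrev Str : Type := List Bool

/-- A conditional machine: a partial computable function mapping a pair of
strings `(p, y)` to a string. -/
abbrev CondMachine : Type := {V : Str × Str →. Str // Partrec V}

/-- `condC V x y` is `C_V(x|y)`: the least length of a program `p` with
`V (p, y) = x`, as an element of `ℕ∞` (it is `⊤` if no such `p` exists). -/
noncomputable def condC (V : CondMachine) (x y : Str) : ℕ∞ :=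
  sInf {n : ℕ∞ | ∃ p : Str, x ∈ V.1 (p, y) ∧ (p.length : ℕ∞) = n}

/-- A conditional machine `U` is optimal if for every conditional machine `V`
there is a constant `d` with `C_U(x|y) ≤ C_V(x|y) + d` for all `x, y`. -/
def OptimalMachine (U : CondMachine) : Prop :=
  ∀ V : CondMachine, ∃ d : ℕ, ∀ x y : Str, condC U x y ≤ condC V x y + (d : ℕ∞)

/-- For an optimal machine all complexities are finite natural numbers. -/
noncomputable def KC (U : CondMachine) (x y : Str) : ℕ := (condC U x y).toNat

/-- `log2 n = Nat.log 2 (n + 2)`, so `log2 n ≥ 1`. -/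
def log2 (n : ℕ) : ℕ := Nat.log 2 (n + 2)

/-!
Let `f k = C(x | x[:k])`. Then `f 0 = C(x) ≥ t`, and `f |x| = C(x | x) = O(1)`. Moreover `f` drops
by at most `O(1)` per step: a program for `x` given `x[:k+1]`, with the bit `x_k` prepended, is a
program for `x` given `x[:k]` on the machine that moves its first program bit to the end of the
condition and then runs `U`. A discrete intermediate value argument finds `k` with `f k` within
`O(1)` of `t`.
-/

namespace CondMachine

def outputProgram : CondMachine := ⟨fun pq => Part.some pq.1, Computable.fst⟩

def outputCondition : CondMachine := ⟨fun pq => Part.some pq.2, Computable.snd⟩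

def shiftBit (pq : Str × Str) : Str × Str :=
  List.casesOn pq.1 ([], pq.2) fun b q => (q, pq.2 ++ [b])

lemma computable_shiftBit : Computable shiftBit := by
  have h := Primrec.list_casesOn (f := Prod.fst) (g := fun pq : Str × Str => (([] : Str), pq.2))
    (h := fun pq (bq : Bool × Str) => (bq.2, pq.2 ++ [bq.1]))
    Primrec.fst (Primrec.pair (Primrec.const []) Primrec.snd)
    (Primrec.to₂ (Primrec.pair (Primrec.snd.comp Primrec.snd)
      (Primrec.list_append.comp (Primrec.snd.comp Primrec.fst)
        (Primrec.list_cons.comp (Primrec.fst.comp Primrec.snd) (Primrec.const [])))))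
  exact (h.of_eq fun ⟨p, y⟩ => by cases p <;> rfl).to_comp

def runAfterShiftBit (U : CondMachine) : CondMachine :=
  ⟨fun pq => U.1 (shiftBit pq), U.2.comp computable_shiftBit⟩

lemma runAfterShiftBit_cons (U : CondMachine) (b : Bool) (p y : Str) :
    (runAfterShiftBit U).1 (b :: p, y) = U.1 (p, y ++ [b]) := rfl

end CondMachine

lemma condC_le_length {V : CondMachine} {x y p : Str} (h : x ∈ V.1 (p, y)) :
    condC V x y ≤ p.length :=
  sInf_le ⟨p, h, rfl⟩

lemma exists_length_eq_condC {V : CondMachine} {x y : Str} (h : condC V x y ≠ ⊤) :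
    ∃ p : Str, x ∈ V.1 (p, y) ∧ (p.length : ℕ∞) = condC V x y := by
  refine csInf_mem (s := {n : ℕ∞ | ∃ p : Str, x ∈ V.1 (p, y) ∧ (p.length : ℕ∞) = n})
    (Set.nonempty_iff_ne_empty.2 fun hempty => h ?_)
  rw [condC, hempty, sInf_empty]

namespace OptimalMachine

variable {U : CondMachine} (hU : OptimalMachine U)
include hU

lemma exists_condC_le_length_add (V : CondMachine) :
    ∃ d : ℕ, ∀ x y p : Str, x ∈ V.1 (p, y) → condC U x y ≤ p.length + d := by
  obtain ⟨d, hd⟩ := hU V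
  exact ⟨d, fun x y p h => (hd x y).trans (by gcongr; exact condC_le_length h)⟩

lemma condC_ne_top (x y : Str) : condC U x y ≠ ⊤ := by
  obtain ⟨d, hd⟩ := hU.exists_condC_le_length_add CondMachine.outputProgram
  exact ne_top_of_le_ne_top (by simp) (hd x y x (Part.mem_some _))

lemma natCast_KC (x y : Str) : (KC U x y : ℕ∞) = condC U x y :=
  ENat.natCast_toNat (hU.condC_ne_top x y)

lemma exists_KC_le_length_add (V : CondMachine) :
    ∃ d : ℕ, ∀ x y p : Str, x ∈ V.1 (p, y) → KC U x y ≤ p.length + d := by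
  obtain ⟨d, hd⟩ := hU.exists_condC_le_length_add V
  exact ⟨d, fun x y p h => ENat.toNat_le_of_le_natCast (by exact_mod_cast hd x y p h)⟩

lemma exists_length_eq_KC (x y : Str) : ∃ p : Str, x ∈ U.1 (p, y) ∧ p.length = KC U x y := by
  obtain ⟨p, hp, hlen⟩ := exists_length_eq_condC (hU.condC_ne_top x y)
  exact ⟨p, hp, by exact_mod_cast hlen.trans (hU.natCast_KC x y).symm⟩

lemma exists_KC_self_le : ∃ d : ℕ, ∀ x : Str, KC U x x ≤ d := by
  obtain ⟨d, hd⟩ := hU.exists_KC_le_length_add CondMachine.outputCondition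
  exact ⟨d, fun x => by simpa using hd x x [] (Part.mem_some _)⟩

lemma exists_KC_le_KC_append_singleton :
    ∃ d : ℕ, ∀ (x y : Str) (b : Bool), KC U x y ≤ KC U x (y ++ [b]) + d := by
  obtain ⟨d, hd⟩ := hU.exists_KC_le_length_add (CondMachine.runAfterShiftBit U)
  refine ⟨d + 1, fun x y b => ?_⟩
  obtain ⟨p, hp, hlen⟩ := hU.exists_length_eq_KC x (y ++ [b])
  have := hd x y (b :: p) (by rwa [CondMachine.runAfterShiftBit_cons])
  simp only [List.length_cons, hlen] at this
  omega

end OptimalMachine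

theorem exists_abs_sub_le_of_le_succ_add (c t : ℤ) :
    ∀ (n : ℕ) (f : ℕ → ℤ), (∀ k < n, f k ≤ f (k + 1) + c) → t ≤ f 0 → f n ≤ t + c →
      ∃ k ≤ n, |f k - t| ≤ c
  | 0, f, _, h0, hn => ⟨0, le_rfl, abs_le.2 ⟨by linarith, by linarith⟩⟩
  | n + 1, f, hstep, h0, hn => by
    by_cases h1 : t ≤ f 1
    · obtain ⟨k, hk, hfk⟩ := exists_abs_sub_le_of_le_succ_add c t n (fun k => f (k + 1))
        (fun k hk => hstep (k + 1) (by omega)) h1 hn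
      exact ⟨k + 1, by omega, hfk⟩
    · have := hstep 0 (by omega)
      exact ⟨0, by omega, abs_le.2 ⟨by linarith, by linarith⟩⟩

/-- For every string `x` and every threshold `t ≤ C(x)` there is a prefix `y`
of `x` with `C(x|y)` within `O(1)` of `t`. -/
theorem exists_prefix_condC_close (U : CondMachine) (hU : OptimalMachine U) :
    ∃ c : ℕ, ∀ (x : Str) (t : ℕ), t ≤ KC U x [] →
      ∃ k ≤ x.length, |(KC U x (x.take k) : ℤ) - (t : ℤ)| ≤ (c : ℤ) := by
  obtain ⟨dEnd, hEnd⟩ := hU.exists_KC_self_le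
  obtain ⟨dStep, hStep⟩ := hU.exists_KC_le_KC_append_singleton
  refine ⟨dEnd + dStep, fun x t ht => ?_⟩
  refine exists_abs_sub_le_of_le_succ_add _ _ x.length (fun k => KC U x (x.take k))
    (fun k hk => ?_) (by simpa using ht) ?_
  · have := hStep x (x.take k) x[k]
    rw [List.take_concat_get' x k hk] at this
    push_cast
    omega
  · have := hEnd x
    simp only [List.take_length]
    omega
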